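/- Let $g \ge 2$ and $N \ge 1$ be integers, let $g' \ge 0$ and $k \ge 0$ be integers with $g' \ge 1$ or $k \ge 4$, and let $q_1 \le q_2 \le \dots \le q_k$ be integers with each $q_i \ge 2$, satisfying $2 - 2g = N\bigl(2 - 2g' - \sum_{i=1}^{k}(1 - 1/q_i)\bigr)$ as rational numbers. Then $N = 12(g-1)$ if and only if $g' = 0$, $k = 4$, and $(q_1, q_2, q_3, q_4) = (2,2,2,3)$. -/

import Mathlib

/-!
Write `χ = 2 - 2g' - ∑ (1 - 1/qᵢ)` for the orbifold Euler characteristic of the quotient.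
Riemann–Hurwitz reads `2 - 2g = N χ`, so `N = 12(g-1)` exactly when `χ = -1/6`.
Each cone point contributes at least `1/2` to the sum, and at least `2/3` unless its order is `2`.
Hence `g' ≥ 1` gives `χ ≤ -1/2` or `χ ∈ 2ℤ`, while for `g' = 0` the sum `13/6` leaves room
for exactly four cone points, only the largest of which can have order `3`.
-/

lemma eq_twelve_mul_sub_one_iff {g N : ℤ} {χ : ℚ} (hN : N ≠ 0)
    (hRH : (2 - 2 * g : ℚ) = N * χ) : N = 12 * (g - 1) ↔ χ = -1 / 6 := by
  have hNQ : (N : ℚ) ≠ 0 := by exact_mod_cast hN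
  constructor
  · intro h
    apply mul_left_cancel₀ hNQ
    rw [← hRH, h]; push_cast; ring
  · intro h
    rw [h] at hRH
    have : (N : ℚ) = 12 * (g - 1) := by linarith
    exact_mod_cast this

def orbifoldEulerChar {k : ℕ} (g' : ℕ) (q : Fin k → ℤ) : ℚ :=
  2 - 2 * g' - ∑ i, (1 - 1 / (q i : ℚ))

lemma half_le_one_sub_one_div {q : ℤ} (hq : 2 ≤ q) : (1 / 2 : ℚ) ≤ 1 - 1 / q := by
  have : (1 : ℚ) / q ≤ 1 / 2 := one_div_le_one_div_of_le two_pos (by exact_mod_cast hq)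
  linarith

lemma card_div_two_le_sum_one_sub_one_div {k : ℕ} {q : Fin k → ℤ} (hq : ∀ i, 2 ≤ q i) :
    (k : ℚ) / 2 ≤ ∑ i, (1 - 1 / (q i : ℚ)) := by
  calc (k : ℚ) / 2 = ∑ _i : Fin k, (1 / 2 : ℚ) := by simp [div_eq_mul_inv]
    _ ≤ _ := Finset.sum_le_sum fun i _ => half_le_one_sub_one_div (hq i)

lemma orbifoldEulerChar_ne_neg_one_sixth_of_one_le_genus {k g' : ℕ} {q : Fin k → ℤ}
    (hg' : 1 ≤ g') (hq : ∀ i, 2 ≤ q i) : orbifoldEulerChar g' q ≠ -1 / 6 := by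
  intro h
  rcases Nat.eq_zero_or_pos k with rfl | hk
  · simp only [orbifoldEulerChar, Finset.univ_eq_empty, Finset.sum_empty] at h
    have h12 : ((12 * g' : ℕ) : ℚ) = (13 : ℕ) := by push_cast; linarith
    have := Nat.cast_injective h12
    omega
  · have hg'Q : (1 : ℚ) ≤ g' := by exact_mod_cast hg'
    have hkQ : (1 : ℚ) ≤ k := by exact_mod_cast hk
    unfold orbifoldEulerChar at h
    linarith [card_div_two_le_sum_one_sub_one_div hq]

lemma eq_two_two_two_three_of_sum_one_sub_one_div {q : Fin 4 → ℤ} (hq : ∀ i, 2 ≤ q i)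
    (hmono : Monotone q) (hsum : ∑ i, (1 - 1 / (q i : ℚ)) = 13 / 6) :
    q = ![2, 2, 2, 3] := by
  rw [Fin.sum_univ_four] at hsum
  have hq2 : q 2 = 2 := by
    by_contra hne
    have h3 : (3 : ℚ) ≤ q 2 := by exact_mod_cast (show 3 ≤ q 2 by have := hq 2; omega)
    have h3' : (3 : ℚ) ≤ q 3 := h3.trans (by exact_mod_cast hmono (by decide : (2 : Fin 4) ≤ 3))
    have t2 := one_div_le_one_div_of_le three_pos h3
    have t3 := one_div_le_one_div_of_le three_pos h3'
    linarith [half_le_one_sub_one_div (hq 0), half_le_one_sub_one_div (hq 1)]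
  have hq0 : q 0 = 2 := le_antisymm (hq2 ▸ hmono (by decide)) (hq 0)
  have hq1 : q 1 = 2 := le_antisymm (hq2 ▸ hmono (by decide)) (hq 1)
  have hq3 : q 3 = 3 := by
    rw [hq0, hq1, hq2] at hsum
    have hpos : (q 3 : ℚ) ≠ 0 := by exact_mod_cast (hq 3).trans_lt' two_pos |>.ne'
    have : (q 3 : ℚ) = 3 := by push_cast at hsum; field_simp at hsum; linarith
    exact_mod_cast this
  ext i
  fin_cases i <;> simp [hq0, hq1, hq2, hq3]

theorem orbifoldEulerChar_eq_neg_one_sixth_iff {k g' : ℕ} {q : Fin k → ℤ}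
    (hq : ∀ i, 2 ≤ q i) (hmono : Monotone q) (hg'k : 1 ≤ g' ∨ 4 ≤ k) :
    orbifoldEulerChar g' q = -1 / 6 ↔
      g' = 0 ∧ k = 4 ∧ ∀ i : Fin k, q i = if (i : ℕ) = 3 then 3 else 2 := by
  constructor
  · intro h
    obtain rfl : g' = 0 := by
      by_contra hne
      exact orbifoldEulerChar_ne_neg_one_sixth_of_one_le_genus (Nat.one_le_iff_ne_zero.2 hne) hq h
    have hsum : ∑ i, (1 - 1 / (q i : ℚ)) = 13 / 6 := by
      unfold orbifoldEulerChar at h; push_cast at h; linarith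
    obtain rfl : k = 4 := by
      have hk : (k : ℚ) < 5 := by linarith [card_div_two_le_sum_one_sub_one_div hq]
      have : k < 5 := by exact_mod_cast hk
      omega
    have h2223 := eq_two_two_two_three_of_sum_one_sub_one_div hq hmono hsum
    refine ⟨rfl, rfl, fun i => ?_⟩
    fin_cases i <;> simp [h2223]
  · rintro ⟨rfl, rfl, hq⟩
    norm_num [orbifoldEulerChar, Fin.sum_univ_four, hq]

theorem riemann_hurwitz_equality_case_general
    (g N : ℤ) (hN : 1 ≤ N)
    (g' k : ℕ) (hg'k : 1 ≤ g' ∨ 4 ≤ k)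
    (q : Fin k → ℤ) (hq : ∀ i, 2 ≤ q i) (hmono : Monotone q)
    (hRH : (2 - 2 * g : ℚ) =
      N * (2 - 2 * g' - ∑ i, (1 - 1 / (q i : ℚ)))) :
    N = 12 * (g - 1) ↔
      g' = 0 ∧ k = 4 ∧ ∀ i : Fin k, q i = if (i : ℕ) = 3 then 3 else 2 := by
  rw [eq_twelve_mul_sub_one_iff (by omega) hRH]
  exact orbifoldEulerChar_eq_neg_one_sixth_iff hq hmono hg'k

/-- Equality analysis for the Riemann–Hurwitz bound: under
`2 - 2g = N (2 - 2g' - ∑ (1 - 1/qᵢ))` with `g ≥ 2`, `N ≥ 1`,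
`q₁ ≤ ⋯ ≤ q_k`, each `qᵢ ≥ 2`, and `g' ≥ 1` or `k ≥ 4`, the maximal order
`N = 12(g-1)` is attained exactly when `g' = 0`, `k = 4` and
`(q₁, q₂, q₃, q₄) = (2, 2, 2, 3)`. -/
theorem riemann_hurwitz_equality_case
    (g N : ℤ) (hg : 2 ≤ g) (hN : 1 ≤ N)
    (g' k : ℕ) (hg'k : 1 ≤ g' ∨ 4 ≤ k)
    (q : Fin k → ℤ) (hq : ∀ i, 2 ≤ q i) (hmono : Monotone q)
    (hRH : (2 - 2 * g : ℚ) =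
      N * (2 - 2 * g' - ∑ i, (1 - 1 / (q i : ℚ)))) :
    N = 12 * (g - 1) ↔
      g' = 0 ∧ k = 4 ∧ ∀ i : Fin k, q i = if (i : ℕ) = 3 then 3 else 2 :=
  riemann_hurwitz_equality_case_general g N hN g' k hg'k q hq hmono hRH
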